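/- Let (Θ, Ω, f : Θ → Z) be a cardinal implementation problem such that f is surjective and Θ^una ∩ Θ^strict ⊆ Θ ⊆ Θ^strict, and suppose f is UD-implemented by a stochastic finite-action mechanism M = ⟨S, g⟩. Then for every z ∈ Z, every θ̂ ∈ Θ^una ∩ Θ^strict at which z is the top-ranked outcome of every agent, and every u ∈ Ω_{θ̂}: f(θ̂) = z and UD(M, u) = ×_{j∈I} S_j^z. -/
import Mathlib


open Function

noncomputable section

/-- A lottery (probability distribution) on the finite outcome set `Z`. -/
def Lottery (Z : Type) [Fintype Z] : Type :=
  {y : Z → ℝ // (∀ z, 0 ≤ y z) ∧ ∑ z, y z = 1}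

variable {Z : Type} [Fintype Z]

/-- The degenerate lottery on the outcome `z`. -/
def Lottery.delta [DecidableEq Z] (z : Z) : Lottery Z :=
  ⟨fun z' => if z' = z then 1 else 0, fun z' => by positivity, by simp⟩

/-- Expected utility of the lottery `y` under the vN-M utility function `u`. -/
def expUtil (u : Z → ℝ) (y : Lottery Z) : ℝ := ∑ z, y.1 z * u z

variable {I : Type} [DecidableEq I] {S : I → Type}

/-- `s_i` is strictly dominated (for agent `i`, at cardinal state `u`, in the mechanism
with outcome function `g`) on the product set `×_j T j`. -/
def Dominated (u : I → Z → ℝ) (g : (∀ i, S i) → Lottery Z)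
    (T : ∀ j, Set (S j)) (i : I) (si : S i) : Prop :=
  ∃ si' : S i, ∀ s : ∀ j, S j, (∀ j, j ≠ i → s j ∈ T j) →
    expUtil (u i) (g (update s i si)) < expUtil (u i) (g (update s i si'))

/-- `UDk u g k i` is the set of strategies of agent `i` surviving `k` rounds of iterative
deletion of strictly dominated strategies at the cardinal state `u` (`UDk u g 0 i = S i`). -/
def UDk (u : I → Z → ℝ) (g : (∀ i, S i) → Lottery Z) : ℕ → ∀ i, Set (S i)
  | 0 => fun _ => Set.univ
  | (k + 1) => fun i => {si ∈ UDk u g k i | ¬ Dominated u g (UDk u g k) i si}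

/-- `UD(M,u)`: profiles surviving one round of deletion. -/
def UDoneSet (u : I → Z → ℝ) (g : (∀ i, S i) → Lottery Z) : Set (∀ i, S i) :=
  {s | ∀ i, s i ∈ UDk u g 1 i}

/-- `UD^∞(M,u)`: profiles surviving iterative deletion (all rounds `k ≥ 1`). -/
def UDinfSet (u : I → Z → ℝ) (g : (∀ i, S i) → Lottery Z) : Set (∀ i, S i) :=
  {s | ∀ i, ∀ k : ℕ, s i ∈ UDk u g (k + 1) i}

/-- `S_i^z`: strategies of agent `i` from which the degenerate outcome `z` is reachable. -/
def Sz [DecidableEq Z] (g : (∀ i, S i) → Lottery Z) (i : I) (z : Z) : Set (S i) :=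
  {si | ∃ s : ∀ j, S j, s i = si ∧ g s = Lottery.delta z}

/-- `×_j T j` satisfies the non-domination property at `u`. -/
def NonDomProp (u : I → Z → ℝ) (g : (∀ i, S i) → Lottery Z) (T : ∀ j, Set (S j)) : Prop :=
  ∀ i, ∀ si ∈ T i, ∀ si' : S i, ∃ s : ∀ j, S j, (∀ j, j ≠ i → s j ∈ T j) ∧
    expUtil (u i) (g (update s i si')) ≤ expUtil (u i) (g (update s i si))

/-- `u` is a cardinal representation of the ordinal state `θ`. -/
def Represents (u : I → Z → ℝ) (θ : I → Z → Z → Prop) : Prop :=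
  ∀ i z z', θ i z z' ↔ u i z' ≤ u i z

/-- `Θ*`: all ordinal states (complete and transitive preference profiles). -/
def ThetaStar (I Z : Type) : Set (I → Z → Z → Prop) :=
  {θ | ∀ i, (∀ z z', θ i z z' ∨ θ i z' z) ∧ Transitive (θ i)}

/-- `Θ^una`: ordinal states where all agents have identical preferences. -/
def ThetaUna (I Z : Type) : Set (I → Z → Z → Prop) :=
  {θ ∈ ThetaStar I Z | ∀ i j z z', θ i z z' ↔ θ j z z'}

/-- `Θ^strict`: ordinal states where no agent has non-trivial indifference. -/
def ThetaStrict (I Z : Type) : Set (I → Z → Z → Prop) :=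
  {θ ∈ ThetaStar I Z | ∀ i z z', θ i z z' → θ i z' z → z = z'}

/-- The strict part `≻_i^θ`. -/
def StrictPref (θ : I → Z → Z → Prop) (i : I) (z z' : Z) : Prop := θ i z z' ∧ ¬ θ i z' z

/-- Agent `i` is a dictator for `f` on `Θ`. -/
def Dictator (Θ : Set (I → Z → Z → Prop)) (f : (I → Z → Z → Prop) → Z) (i : I) : Prop :=
  ∀ θ ∈ Θ, ∀ z, z ≠ f θ → StrictPref θ i (f θ) z

/-- `(Θ, Ω)` form a cardinal implementation problem: `Θ` is a set of ordinal states, every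
member of `Ω` is a cardinal representation of some `θ ∈ Θ`, and `Ω_θ ≠ ∅` for all `θ ∈ Θ`. -/
def CIProblem (Θ : Set (I → Z → Z → Prop)) (Ω : Set (I → Z → ℝ)) : Prop :=
  Θ ⊆ ThetaStar I Z ∧ (∀ u ∈ Ω, ∃ θ ∈ Θ, Represents u θ) ∧
    ∀ θ ∈ Θ, ∃ u ∈ Ω, Represents u θ

/-- `f` is UD-implemented by the mechanism with outcome function `g`. -/
def UDImplements [DecidableEq Z] (Θ : Set (I → Z → Z → Prop)) (Ω : Set (I → Z → ℝ))
    (f : (I → Z → Z → Prop) → Z) (g : (∀ i, S i) → Lottery Z) : Prop :=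
  ∀ θ ∈ Θ, ∀ u ∈ Ω, Represents u θ → g '' UDoneSet u g = {Lottery.delta (f θ)}

/-- `f` is UD^∞-implemented by the mechanism with outcome function `g`. -/
def UDinfImplements [DecidableEq Z] (Θ : Set (I → Z → Z → Prop)) (Ω : Set (I → Z → ℝ))
    (f : (I → Z → Z → Prop) → Z) (g : (∀ i, S i) → Lottery Z) : Prop :=
  ∀ θ ∈ Θ, ∀ u ∈ Ω, Represents u θ → g '' UDinfSet u g = {Lottery.delta (f θ)}

/-- `Θ^{(i1,i2)-z}`: strict states where `z` is second-best for both `i1` and `i2`,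
whose top-ranked outcomes differ. -/
def ThetaSecond [Fintype Z] (i1 i2 : I) (z : Z) : Set (I → Z → Z → Prop) :=
  {θ ∈ ThetaStrict I Z |
    Set.ncard {z' | θ i1 z z'} = Fintype.card Z - 1 ∧
    Set.ncard {z' | θ i2 z z'} = Fintype.card Z - 1 ∧
    {z' | θ i1 z z'} ≠ {z' | θ i2 z z'}}

end

section Aux

variable {Z : Type} [Fintype Z] [DecidableEq Z] {I : Type} [DecidableEq I] {S : I → Type}

lemma expUtil_delta (u : Z → ℝ) (z : Z) : expUtil u (Lottery.delta z) = u z := by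
  simp [expUtil, Lottery.delta]

lemma expUtil_le_top (u : Z → ℝ) (z : Z) (htop : ∀ z', u z' ≤ u z)
    (y : Lottery Z) : expUtil u y ≤ u z := by
  have h : expUtil u y ≤ ∑ z', y.1 z' * u z := by
    apply Finset.sum_le_sum
    intro z' _
    exact mul_le_mul_of_nonneg_left (htop z') (y.2.1 z')
  calc expUtil u y ≤ ∑ z', y.1 z' * u z := h
    _ = (∑ z', y.1 z') * u z := by rw [Finset.sum_mul]
    _ = u z := by rw [y.2.2, one_mul]

lemma Sz_not_dominated (u : I → Z → ℝ) (g : (∀ i, S i) → Lottery Z)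
    (z : Z) (i : I) (htop : ∀ z', u i z' ≤ u i z)
    (si : S i) (hsi : si ∈ Sz g i z) :
    ¬ Dominated u g (fun _ => Set.univ) i si := by
  rintro ⟨si', hsi'⟩
  obtain ⟨s₀, hs₀i, hs₀⟩ := hsi
  have h1 := hsi' s₀ (fun j _ => Set.mem_univ _)
  rw [← hs₀i, Function.update_eq_self, hs₀, expUtil_delta] at h1
  exact absurd h1 (not_lt.mpr (expUtil_le_top (u i) z htop _))

lemma Sz_mem_UDone (u : I → Z → ℝ) (g : (∀ i, S i) → Lottery Z)
    (z : Z) (htop : ∀ i z', u i z' ≤ u i z)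
    (s : ∀ i, S i) (hs : ∀ j, s j ∈ Sz g j z) : s ∈ UDoneSet u g := by
  intro i
  refine ⟨Set.mem_univ _, ?_⟩
  exact Sz_not_dominated u g z i (htop i) (s i) (hs i)

lemma delta_inj {z z' : Z} (h : Lottery.delta z = Lottery.delta z') : z = z' := by
  by_contra hne
  have := congrArg (fun y : Lottery Z => y.1 z) h
  simp [Lottery.delta, hne] at this

end Aux

/-- If `f` is UD-implemented by `⟨S, g⟩`, then for every outcome `z`, every unanimous
strict state `θ̂` at which `z` is top-ranked by every agent, and every `u ∈ Ω_θ̂`, we have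
`f(θ̂) = z` and `UD(M, u) = ×_j S_j^z`. -/
theorem UD_equals_Sz_product_at_unanimous_top
    {I Z : Type} [Fintype I] [Fintype Z] [DecidableEq I] [DecidableEq Z]
    (hI : 2 ≤ Fintype.card I) (hZ : 2 ≤ Fintype.card Z)
    (Θ : Set (I → Z → Z → Prop)) (Ω : Set (I → Z → ℝ)) (f : (I → Z → Z → Prop) → Z)
    (hCIP : CIProblem Θ Ω)
    (hsurj : ∀ z : Z, ∃ θ ∈ Θ, f θ = z)
    (hsub1 : ThetaUna I Z ∩ ThetaStrict I Z ⊆ Θ) (hsub2 : Θ ⊆ ThetaStrict I Z)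
    (S : I → Type) (hfin : ∀ i, Finite (S i)) (hne : ∀ i, Nonempty (S i))
    (g : (∀ i, S i) → Lottery Z) (himp : UDImplements Θ Ω f g) :
    ∀ z : Z, ∀ θ' ∈ ThetaUna I Z ∩ ThetaStrict I Z, (∀ i z', θ' i z z') →
      ∀ u ∈ Ω, Represents u θ' →
        f θ' = z ∧ UDoneSet u g = {s : ∀ i, S i | ∀ j, s j ∈ Sz g j z} := by
  intro z θ' hθ' htopz u hu hrep
  have hθ'Θ : θ' ∈ Θ := hsub1 hθ'
  have htop : ∀ i z', u i z' ≤ u i z := fun i z' => (hrep i z z').mp (htopz i z')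
  have himpθ' : g '' UDoneSet u g = {Lottery.delta (f θ')} := himp θ' hθ'Θ u hu hrep
  -- get a profile reaching delta z
  obtain ⟨θ, hθ, hfθ⟩ := hsurj z
  obtain ⟨uθ, huθ, hrepθ⟩ := hCIP.2.2 θ hθ
  have himpθ : g '' UDoneSet uθ g = {Lottery.delta (f θ)} := himp θ hθ uθ huθ hrepθ
  have hmem : Lottery.delta z ∈ g '' UDoneSet uθ g := by
    rw [himpθ, hfθ]; rfl
  obtain ⟨s₀, _, hgs₀⟩ := hmem
  have hs₀Sz : ∀ j, s₀ j ∈ Sz g j z := fun j => ⟨s₀, rfl, hgs₀⟩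
  have hs₀UD : s₀ ∈ UDoneSet u g := Sz_mem_UDone u g z htop s₀ hs₀Sz
  have hfθ' : f θ' = z := by
    have : g s₀ ∈ g '' UDoneSet u g := Set.mem_image_of_mem g hs₀UD
    rw [himpθ', hgs₀] at this
    exact (delta_inj this).symm
  refine ⟨hfθ', ?_⟩
  ext s
  constructor
  · intro hs
    have : g s ∈ g '' UDoneSet u g := Set.mem_image_of_mem g hs
    rw [himpθ', hfθ'] at this
    exact fun j => ⟨s, rfl, this⟩
  · intro hs
    exact Sz_mem_UDone u g z htop s hs
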